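/- Let (A,·,α) be a Hom-pre-Lie algebra and (V,β,ρ,μ) a representation with α and β invertible. Then for every n the cohomology group H^{n-1}(A^C; Hom(A,V)) of the sub-adjacent Hom-Lie algebra A^C with coefficients in the representation (Hom(A,V), Ad, ρ̂) is isomorphic to the cohomology group H^n(A; V) of the Hom-pre-Lie algebra (A,·,α) with coefficients in (V,β,ρ,μ); the isomorphism is induced by the canonical cochain isomorphism Φ(ω)(x_1,…,x_{n-1},x_n) = ω(x_1,…,x_{n-1})(x_n). -/
import Mathlib


/-- A Hom-pre-Lie algebra structure on `A`: a bilinear product and an algebra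
morphism `α` satisfying the Hom-pre-Lie identity. -/
def IsHomPreLie {K A : Type*} [Field K] [AddCommGroup A] [Module K A]
    (mul : A →ₗ[K] A →ₗ[K] A) (α : A →ₗ[K] A) : Prop :=
  (∀ x y, α (mul x y) = mul (α x) (α y)) ∧
  (∀ x y z, mul (mul x y) (α z) - mul (α x) (mul y z)
      = mul (mul y x) (α z) - mul (α y) (mul x z))

/-- A representation of a Hom-Lie algebra `(L, bracket, α)` on `V` with respect to `β`. -/
def IsHomLieRep {K L V : Type*} [Field K] [AddCommGroup L] [Module K L]
    [AddCommGroup V] [Module K V]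
    (bracket : L →ₗ[K] L →ₗ[K] L) (α : L →ₗ[K] L)
    (β : V →ₗ[K] V) (ρ : L →ₗ[K] Module.End K V) : Prop :=
  (∀ x, ρ (α x) ∘ₗ β = β ∘ₗ ρ x) ∧
  (∀ x y, ρ (bracket x y) ∘ₗ β = ρ (α x) ∘ₗ ρ y - ρ (α y) ∘ₗ ρ x)

/-- A representation `(V, β, ρ, μ)` of a Hom-pre-Lie algebra `(A, mul, α)`:
`ρ` is a representation of the sub-adjacent Hom-Lie algebra (whose bracket is the
commutator `mul - mul.flip`) with respect to `β`, together with the two compatibility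
conditions for `μ`. -/
def IsHomPreLieRep {K A V : Type*} [Field K] [AddCommGroup A] [Module K A]
    [AddCommGroup V] [Module K V]
    (mul : A →ₗ[K] A →ₗ[K] A) (α : A →ₗ[K] A)
    (β : V →ₗ[K] V) (ρ μ : A →ₗ[K] Module.End K V) : Prop :=
  IsHomLieRep (mul - mul.flip) α β ρ ∧
  (∀ x, β ∘ₗ μ x = μ (α x) ∘ₗ β) ∧
  (∀ x y, μ (α y) ∘ₗ μ x - μ (mul x y) ∘ₗ β = μ (α y) ∘ₗ ρ x - ρ (α x) ∘ₗ μ y)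

/-- `Ad(f) = β ∘ f ∘ α⁻¹` on `Hom(A,V)`. -/
def AdMap {K A V : Type*} [Field K] [AddCommGroup A] [Module K A]
    [AddCommGroup V] [Module K V]
    (α : A ≃ₗ[K] A) (β : V →ₗ[K] V) : Module.End K (A →ₗ[K] V) where
  toFun f := β ∘ₗ f ∘ₗ (α.symm : A →ₗ[K] A)
  map_add' f g := by ext a; simp
  map_smul' c f := by ext a; simp

/-- `ρ̂ : A → gl(Hom(A,V))`, defined by
`ρ̂(x)(f)(y) = ρ(x)(f(α⁻¹ y)) + μ(y)(f(α⁻¹ x)) − β(f(α⁻¹(x·y)))`. -/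
def hatRho {K A V : Type*} [Field K] [AddCommGroup A] [Module K A]
    [AddCommGroup V] [Module K V]
    (mul : A →ₗ[K] A →ₗ[K] A) (α : A ≃ₗ[K] A) (β : V →ₗ[K] V)
    (ρ μ : A →ₗ[K] Module.End K V) : A →ₗ[K] Module.End K (A →ₗ[K] V) where
  toFun x :=
    { toFun := fun f =>
        ρ x ∘ₗ f ∘ₗ (α.symm : A →ₗ[K] A)
          + (μ : A →ₗ[K] V →ₗ[K] V).flip (f (α.symm x))
          - β ∘ₗ f ∘ₗ ((α.symm : A →ₗ[K] A) ∘ₗ (α.symm : A →ₗ[K] A) ∘ₗ mul x)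
      map_add' := fun f g => by ext a; simp; abel
      map_smul' := fun c f => by ext a; simp [smul_sub] }
  map_add' x y := by
    ext f a
    simp [map_add]
    abel
  map_smul' c x := by
    ext f a
    simp [smul_sub]

/-- The `i<j` part of the Hom-Lie algebra coboundary operator, written on plain
functions `(Fin k → A) → W`. -/
noncomputable def homLiePair {K A W : Type*} [Field K] [AddCommGroup A] [Module K A]
    [AddCommGroup W] [Module K W]
    (bracket : A →ₗ[K] A →ₗ[K] A) (α : A ≃ₗ[K] A) (γ : W →ₗ[K] W) :
    (k : ℕ) → ((Fin k → A) → W) → (Fin (k + 1) → A) → W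
  | 0, _, _ => 0
  | (k + 1), ω, xs =>
    ∑ i : Fin (k + 2), ∑ j : Fin (k + 2),
      if h : (i : ℕ) < (j : ℕ) then
        ((-1 : K) ^ ((i : ℕ) + (j : ℕ))) •
          γ (ω (Fin.cons
              (bracket (α.symm (α.symm (xs i))) (α.symm (α.symm (xs j))))
              (fun l : Fin k => α.symm (xs (j.succAbove
                ((⟨(i : ℕ), lt_of_lt_of_le h (Nat.lt_succ_iff.mp j.isLt)⟩ :
                    Fin (k + 1)).succAbove l))))))
      else 0

/-- The coboundary operator of a Hom-Lie algebra `(A, bracket, α)` with coefficients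
in a representation `(W, γ, σ)`, written on plain functions `(Fin k → A) → W`:
`(dω)(x₁,…,x_{k+1}) = Σᵢ (−1)^{i+1} σ(xᵢ)(ω(α⁻¹x₁,…,î,…,α⁻¹x_{k+1}))
 + Σ_{i<j} (−1)^{i+j} γ(ω([α⁻²xᵢ,α⁻²xⱼ], α⁻¹x₁,…,î,…,ĵ,…,α⁻¹x_{k+1}))`. -/
noncomputable def homLieD {K A W : Type*} [Field K] [AddCommGroup A] [Module K A]
    [AddCommGroup W] [Module K W]
    (bracket : A →ₗ[K] A →ₗ[K] A) (α : A ≃ₗ[K] A)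
    (σ : A →ₗ[K] Module.End K W) (γ : W →ₗ[K] W)
    (k : ℕ) (ω : (Fin k → A) → W) : (Fin (k + 1) → A) → W :=
  fun xs =>
    (∑ i : Fin (k + 1), (-1 : K) ^ (i : ℕ) •
        σ (xs i) (ω (fun l => α.symm (xs (i.succAbove l)))))
    + homLiePair bracket α γ k ω xs

/-- The `i<j` part of the Hom-pre-Lie coboundary operator. -/
noncomputable def preLiePair {K A V : Type*} [Field K] [AddCommGroup A] [Module K A]
    [AddCommGroup V] [Module K V]
    (mul : A →ₗ[K] A →ₗ[K] A) (α : A ≃ₗ[K] A) (β : V →ₗ[K] V) :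
    (m : ℕ) → ((Fin m → A) → A → V) → (Fin (m + 1) → A) → A → V
  | 0, _, _, _ => 0
  | (m + 1), f, xs, z =>
    ∑ i : Fin (m + 2), ∑ j : Fin (m + 2),
      if h : (i : ℕ) < (j : ℕ) then
        ((-1 : K) ^ ((i : ℕ) + (j : ℕ))) •
          β (f (Fin.cons
              (mul (α.symm (α.symm (xs i))) (α.symm (α.symm (xs j)))
                - mul (α.symm (α.symm (xs j))) (α.symm (α.symm (xs i))))
              (fun l : Fin m => α.symm (xs (j.succAbove
                ((⟨(i : ℕ), lt_of_lt_of_le h (Nat.lt_succ_iff.mp j.isLt)⟩ :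
                    Fin (m + 1)).succAbove l)))))
            (α.symm z))
      else 0

/-- The coboundary operator `∂ : C^{m+1}(A;V) → C^{m+2}(A;V)` of a Hom-pre-Lie
algebra `(A, mul, α)` with coefficients in a representation `(V, β, ρ, μ)`, written
on plain functions: an element of `Hom(∧^m A ⊗ A, V)` is an `(m+1)`-ary map, given
as a function `(Fin m → A) → A → V` (the first `m` arguments are the alternating
ones, the last argument is the extra one):
`(∂f)(x₁,…,x_{m+2}) = Σᵢ (−1)^{i+1} ρ(xᵢ) f(α⁻¹x₁,…,î,…,α⁻¹x_{m+2})
 + Σᵢ (−1)^{i+1} μ(x_{m+2}) f(α⁻¹x₁,…,î,…,α⁻¹x_{m+1}, α⁻¹xᵢ)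
 − Σᵢ (−1)^{i+1} β f(α⁻¹x₁,…,î,…,α⁻¹x_{m+1}, α⁻²xᵢ·α⁻²x_{m+2})
 + Σ_{i<j} (−1)^{i+j} β f([α⁻²xᵢ,α⁻²xⱼ]_C, α⁻¹x₁,…,î,…,ĵ,…,α⁻¹x_{m+2})`. -/
noncomputable def preLieD {K A V : Type*} [Field K] [AddCommGroup A] [Module K A]
    [AddCommGroup V] [Module K V]
    (mul : A →ₗ[K] A →ₗ[K] A) (α : A ≃ₗ[K] A)
    (ρ μ : A →ₗ[K] Module.End K V) (β : V →ₗ[K] V)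
    (m : ℕ) (f : (Fin m → A) → A → V) : (Fin (m + 1) → A) → A → V :=
  fun xs z =>
    (∑ i : Fin (m + 1), (-1 : K) ^ (i : ℕ) •
        ρ (xs i) (f (fun l => α.symm (xs (i.succAbove l))) (α.symm z)))
    + (∑ i : Fin (m + 1), (-1 : K) ^ (i : ℕ) •
        μ z (f (fun l => α.symm (xs (i.succAbove l))) (α.symm (xs i))))
    - (∑ i : Fin (m + 1), (-1 : K) ^ (i : ℕ) •
        β (f (fun l => α.symm (xs (i.succAbove l)))
            (mul (α.symm (α.symm (xs i))) (α.symm (α.symm z)))))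
    + preLiePair mul α β m f xs z

section Cochains

variable {K A V : Type*} [Field K] [AddCommGroup A] [Module K A]
    [AddCommGroup V] [Module K V]

/-- A Hom-Lie `k`-cochain with values in `W = Hom(A,V)`: an alternating
multilinear function `∧^k A → Hom(A,V)`. -/
def IsLieCochain (k : ℕ) (w : (Fin k → A) → (A →ₗ[K] V)) : Prop :=
  (∀ (v : Fin k → A) (i : Fin k) (a b : A),
      w (Function.update v i (a + b))
        = w (Function.update v i a) + w (Function.update v i b)) ∧
  (∀ (v : Fin k → A) (i : Fin k) (c : K) (a : A),
      w (Function.update v i (c • a)) = c • w (Function.update v i a)) ∧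
  (∀ (v : Fin k → A) (i j : Fin k), i ≠ j → v i = v j → w v = 0)

/-- A Hom-pre-Lie cochain in `Hom(∧^m A ⊗ A, V)`: an `(m+1)`-linear map
`A^{m+1} → V` alternating in its first `m` arguments. -/
def IsPreLieCochain (K : Type*) {A V : Type*} [Field K] [AddCommGroup A]
    [Module K A] [AddCommGroup V] [Module K V]
    (m : ℕ) (f : (Fin m → A) → A → V) : Prop :=
  (∀ (v : Fin m → A) (z : A) (i : Fin m) (a b : A),
      f (Function.update v i (a + b)) z
        = f (Function.update v i a) z + f (Function.update v i b) z) ∧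
  (∀ (v : Fin m → A) (z : A) (i : Fin m) (c : K) (a : A),
      f (Function.update v i (c • a)) z = c • f (Function.update v i a) z) ∧
  (∀ (v : Fin m → A) (a b : A), f v (a + b) = f v a + f v b) ∧
  (∀ (v : Fin m → A) (c : K) (a : A), f v (c • a) = c • f v a) ∧
  (∀ (v : Fin m → A) (z : A) (i j : Fin m), i ≠ j → v i = v j → f v z = 0)

theorem IsLieCochain.add {k : ℕ} {w w' : (Fin k → A) → (A →ₗ[K] V)}
    (h : IsLieCochain k w) (h' : IsLieCochain k w') : IsLieCochain k (w + w') := by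
  refine ⟨fun v i a b => ?_, fun v i c a => ?_, fun v i j hij hv => ?_⟩
  · simp only [Pi.add_apply, h.1 v i a b, h'.1 v i a b]; abel
  · simp only [Pi.add_apply, h.2.1 v i c a, h'.2.1 v i c a, smul_add]
  · simp only [Pi.add_apply, h.2.2 v i j hij hv, h'.2.2 v i j hij hv, add_zero]

theorem IsLieCochain.smul {k : ℕ} {w : (Fin k → A) → (A →ₗ[K] V)} (c : K)
    (h : IsLieCochain k w) : IsLieCochain k (c • w) := by
  refine ⟨fun v i a b => ?_, fun v i c' a => ?_, fun v i j hij hv => ?_⟩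
  · simp only [Pi.smul_apply, h.1 v i a b, smul_add]
  · simp only [Pi.smul_apply, h.2.1 v i c' a, smul_comm c c']
  · simp only [Pi.smul_apply, h.2.2 v i j hij hv, smul_zero]

theorem IsLieCochain.zero {k : ℕ} : IsLieCochain (K := K) (A := A) (V := V) k 0 := by
  refine ⟨fun v i a b => ?_, fun v i c a => ?_, fun v i j hij hv => ?_⟩ <;> simp

theorem IsPreLieCochain.add {m : ℕ} {f f' : (Fin m → A) → A → V}
    (h : IsPreLieCochain K m f) (h' : IsPreLieCochain K m f') :
    IsPreLieCochain K m (f + f') := by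
  refine ⟨fun v z i a b => ?_, fun v z i c a => ?_, fun v a b => ?_,
    fun v c a => ?_, fun v z i j hij hv => ?_⟩
  · simp only [Pi.add_apply, h.1 v z i a b, h'.1 v z i a b]; abel
  · simp only [Pi.add_apply, h.2.1 v z i c a, h'.2.1 v z i c a, smul_add]
  · simp only [Pi.add_apply, h.2.2.1 v a b, h'.2.2.1 v a b]; abel
  · simp only [Pi.add_apply, h.2.2.2.1 v c a, h'.2.2.2.1 v c a, smul_add]
  · simp only [Pi.add_apply, h.2.2.2.2 v z i j hij hv, h'.2.2.2.2 v z i j hij hv,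
      add_zero]

theorem IsPreLieCochain.smul {m : ℕ} {f : (Fin m → A) → A → V} (c : K)
    (h : IsPreLieCochain K m f) : IsPreLieCochain K m (c • f) := by
  refine ⟨fun v z i a b => ?_, fun v z i c' a => ?_, fun v a b => ?_,
    fun v c' a => ?_, fun v z i j hij hv => ?_⟩
  · simp only [Pi.smul_apply, h.1 v z i a b, smul_add]
  · simp only [Pi.smul_apply, h.2.1 v z i c' a, smul_comm c c']
  · simp only [Pi.smul_apply, h.2.2.1 v a b, smul_add]
  · simp only [Pi.smul_apply, h.2.2.2.1 v c' a, smul_comm c c']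
  · simp only [Pi.smul_apply, h.2.2.2.2 v z i j hij hv, smul_zero]

theorem IsPreLieCochain.zero {m : ℕ} :
    IsPreLieCochain K (A := A) (V := V) m 0 := by
  refine ⟨fun v z i a b => ?_, fun v z i c a => ?_, fun v a b => ?_,
    fun v c a => ?_, fun v z i j hij hv => ?_⟩ <;> simp

end Cochains

section DLinear

variable {K A W V : Type*} [Field K] [AddCommGroup A] [Module K A]
    [AddCommGroup W] [Module K W] [AddCommGroup V] [Module K V]

theorem homLiePair_add (bracket : A →ₗ[K] A →ₗ[K] A) (α : A ≃ₗ[K] A)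
    (γ : W →ₗ[K] W) (k : ℕ) (w w' : (Fin k → A) → W) :
    homLiePair bracket α γ k (w + w')
      = homLiePair bracket α γ k w + homLiePair bracket α γ k w' := by
  cases k with
  | zero => funext xs; simp [homLiePair]
  | succ k =>
      funext xs
      simp only [homLiePair, Pi.add_apply]
      rw [← Finset.sum_add_distrib]
      refine Finset.sum_congr rfl fun i _ => ?_
      rw [← Finset.sum_add_distrib]
      refine Finset.sum_congr rfl fun j _ => ?_
      split
      · rw [map_add, smul_add]
      · rw [add_zero]

theorem homLiePair_smul (bracket : A →ₗ[K] A →ₗ[K] A) (α : A ≃ₗ[K] A)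
    (γ : W →ₗ[K] W) (k : ℕ) (c : K) (w : (Fin k → A) → W) :
    homLiePair bracket α γ k (c • w) = c • homLiePair bracket α γ k w := by
  cases k with
  | zero => funext xs; simp [homLiePair]
  | succ k =>
      funext xs
      simp only [homLiePair, Pi.smul_apply, Finset.smul_sum]
      refine Finset.sum_congr rfl fun i _ => ?_
      refine Finset.sum_congr rfl fun j _ => ?_
      split
      · rw [map_smul, smul_comm]
      · rw [smul_zero]

theorem homLieD_add (bracket : A →ₗ[K] A →ₗ[K] A) (α : A ≃ₗ[K] A)
    (σ : A →ₗ[K] Module.End K W) (γ : W →ₗ[K] W) (k : ℕ)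
    (w w' : (Fin k → A) → W) :
    homLieD bracket α σ γ k (w + w')
      = homLieD bracket α σ γ k w + homLieD bracket α σ γ k w' := by
  funext xs
  simp only [homLieD, Pi.add_apply, homLiePair_add, map_add, smul_add,
    Finset.sum_add_distrib]
  abel

theorem homLieD_smul (bracket : A →ₗ[K] A →ₗ[K] A) (α : A ≃ₗ[K] A)
    (σ : A →ₗ[K] Module.End K W) (γ : W →ₗ[K] W) (k : ℕ) (c : K)
    (w : (Fin k → A) → W) :
    homLieD bracket α σ γ k (c • w) = c • homLieD bracket α σ γ k w := by
  funext xs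
  simp only [homLieD, Pi.smul_apply, homLiePair_smul, map_smul, smul_add,
    Finset.smul_sum]
  congr 1
  refine Finset.sum_congr rfl fun i _ => ?_
  rw [smul_comm]

theorem preLiePair_add (mul : A →ₗ[K] A →ₗ[K] A) (α : A ≃ₗ[K] A)
    (β : V →ₗ[K] V) (m : ℕ) (f f' : (Fin m → A) → A → V) :
    preLiePair mul α β m (f + f')
      = preLiePair mul α β m f + preLiePair mul α β m f' := by
  cases m with
  | zero => funext xs z; simp [preLiePair]
  | succ m =>
      funext xs z
      simp only [preLiePair, Pi.add_apply]
      rw [← Finset.sum_add_distrib]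
      refine Finset.sum_congr rfl fun i _ => ?_
      rw [← Finset.sum_add_distrib]
      refine Finset.sum_congr rfl fun j _ => ?_
      split
      · rw [map_add, smul_add]
      · rw [add_zero]

theorem preLiePair_smul (mul : A →ₗ[K] A →ₗ[K] A) (α : A ≃ₗ[K] A)
    (β : V →ₗ[K] V) (m : ℕ) (c : K) (f : (Fin m → A) → A → V) :
    preLiePair mul α β m (c • f) = c • preLiePair mul α β m f := by
  cases m with
  | zero => funext xs z; simp [preLiePair]
  | succ m =>
      funext xs z
      simp only [preLiePair, Pi.smul_apply, Finset.smul_sum]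
      refine Finset.sum_congr rfl fun i _ => ?_
      refine Finset.sum_congr rfl fun j _ => ?_
      split
      · rw [map_smul, smul_comm]
      · rw [smul_zero]

theorem preLieD_add (mul : A →ₗ[K] A →ₗ[K] A) (α : A ≃ₗ[K] A)
    (ρ μ : A →ₗ[K] Module.End K V) (β : V →ₗ[K] V) (m : ℕ)
    (f f' : (Fin m → A) → A → V) :
    preLieD mul α ρ μ β m (f + f')
      = preLieD mul α ρ μ β m f + preLieD mul α ρ μ β m f' := by
  funext xs z
  simp only [preLieD, Pi.add_apply, preLiePair_add, map_add, smul_add,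
    Finset.sum_add_distrib]
  abel

theorem preLieD_smul (mul : A →ₗ[K] A →ₗ[K] A) (α : A ≃ₗ[K] A)
    (ρ μ : A →ₗ[K] Module.End K V) (β : V →ₗ[K] V) (m : ℕ) (c : K)
    (f : (Fin m → A) → A → V) :
    preLieD mul α ρ μ β m (c • f) = c • preLieD mul α ρ μ β m f := by
  funext xs z
  simp only [preLieD, Pi.smul_apply, preLiePair_smul, map_smul, smul_add,
    smul_sub, Finset.smul_sum]
  congr 2
  · congr 1
    · refine Finset.sum_congr rfl fun i _ => ?_
      rw [smul_comm]
    · refine Finset.sum_congr rfl fun i _ => ?_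
      rw [smul_comm]
  · refine Finset.sum_congr rfl fun i _ => ?_
    rw [smul_comm]

end DLinear

section Cohomology

variable {K A V : Type*} [Field K] [AddCommGroup A] [Module K A]
    [AddCommGroup V] [Module K V]

/-- The space of closed Hom-Lie `k`-cochains with coefficients in the
representation `(Hom(A,V), γ, σ)`. -/
noncomputable def lieZ (bracket : A →ₗ[K] A →ₗ[K] A) (α : A ≃ₗ[K] A)
    (σ : A →ₗ[K] Module.End K (A →ₗ[K] V)) (γ : Module.End K (A →ₗ[K] V))
    (k : ℕ) : Submodule K ((Fin k → A) → (A →ₗ[K] V)) where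
  carrier := {w | IsLieCochain k w ∧ homLieD bracket α σ γ k w = 0}
  add_mem' := fun {w} {w'} h h' =>
    ⟨h.1.add h'.1, by rw [homLieD_add, h.2, h'.2, add_zero]⟩
  zero_mem' := ⟨IsLieCochain.zero, by
    have h0 := homLieD_smul bracket α σ γ k (0 : K)
      (0 : (Fin k → A) → (A →ₗ[K] V))
    simpa using h0⟩
  smul_mem' := fun c {w} h => ⟨h.1.smul c, by rw [homLieD_smul, h.2, smul_zero]⟩

/-- The space of exact Hom-Lie `k`-cochains (with `B⁰ = 0`). -/
noncomputable def lieB (bracket : A →ₗ[K] A →ₗ[K] A) (α : A ≃ₗ[K] A)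
    (σ : A →ₗ[K] Module.End K (A →ₗ[K] V)) (γ : Module.End K (A →ₗ[K] V)) :
    (k : ℕ) → Submodule K ((Fin k → A) → (A →ₗ[K] V))
  | 0 => ⊥
  | (k + 1) =>
    { carrier := {w | ∃ g, IsLieCochain k g ∧ homLieD bracket α σ γ k g = w}
      add_mem' := by
        rintro w w' ⟨g, hg, rfl⟩ ⟨g', hg', rfl⟩
        exact ⟨g + g', hg.add hg', homLieD_add bracket α σ γ k g g'⟩
      zero_mem' := ⟨0, IsLieCochain.zero, by
        have h0 := homLieD_smul bracket α σ γ k (0 : K)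
          (0 : (Fin k → A) → (A →ₗ[K] V))
        simpa using h0⟩
      smul_mem' := by
        rintro c w ⟨g, hg, rfl⟩
        exact ⟨c • g, hg.smul c, homLieD_smul bracket α σ γ k c g⟩ }

/-- The space of closed Hom-pre-Lie cochains in `Hom(∧^m A ⊗ A, V)`. -/
noncomputable def preZ (mul : A →ₗ[K] A →ₗ[K] A) (α : A ≃ₗ[K] A)
    (ρ μ : A →ₗ[K] Module.End K V) (β : V →ₗ[K] V)
    (m : ℕ) : Submodule K ((Fin m → A) → A → V) where
  carrier := {f | IsPreLieCochain K m f ∧ preLieD mul α ρ μ β m f = 0}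
  add_mem' := fun {f} {f'} h h' =>
    ⟨h.1.add h'.1, by rw [preLieD_add, h.2, h'.2, add_zero]⟩
  zero_mem' := ⟨IsPreLieCochain.zero, by
    have h0 := preLieD_smul mul α ρ μ β m (0 : K) (0 : (Fin m → A) → A → V)
    simpa using h0⟩
  smul_mem' := fun c {f} h => ⟨h.1.smul c, by rw [preLieD_smul, h.2, smul_zero]⟩

/-- The space of exact Hom-pre-Lie cochains in `Hom(∧^m A ⊗ A, V)`
(with the convention that it is `0` in lowest degree). -/
noncomputable def preB (mul : A →ₗ[K] A →ₗ[K] A) (α : A ≃ₗ[K] A)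
    (ρ μ : A →ₗ[K] Module.End K V) (β : V →ₗ[K] V) :
    (m : ℕ) → Submodule K ((Fin m → A) → A → V)
  | 0 => ⊥
  | (m + 1) =>
    { carrier := {f | ∃ g, IsPreLieCochain K m g ∧ preLieD mul α ρ μ β m g = f}
      add_mem' := by
        rintro f f' ⟨g, hg, rfl⟩ ⟨g', hg', rfl⟩
        exact ⟨g + g', hg.add hg', preLieD_add mul α ρ μ β m g g'⟩
      zero_mem' := ⟨0, IsPreLieCochain.zero, by
        have h0 := preLieD_smul mul α ρ μ β m (0 : K) (0 : (Fin m → A) → A → V)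
        simpa using h0⟩
      smul_mem' := by
        rintro c f ⟨g, hg, rfl⟩
        exact ⟨c • g, hg.smul c, preLieD_smul mul α ρ μ β m c g⟩ }

end Cohomology


section Main
variable {K A V : Type*} [Field K] [AddCommGroup A] [Module K A]
    [AddCommGroup V] [Module K V]

theorem Phi_homLiePair (mul : A →ₗ[K] A →ₗ[K] A) (α : A ≃ₗ[K] A)
    (β : V →ₗ[K] V) (m : ℕ) (w : (Fin m → A) → (A →ₗ[K] V))
    (xs : Fin (m + 1) → A) (z : A) :
    homLiePair (mul - mul.flip) α (AdMap α β) m w xs z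
      = preLiePair mul α β m (fun v y => w v y) xs z := by
  cases m with
  | zero => simp [homLiePair, preLiePair]
  | succ m =>
      simp only [homLiePair, preLiePair, LinearMap.coe_sum, Finset.sum_apply]
      refine Finset.sum_congr rfl fun i _ => ?_
      refine Finset.sum_congr rfl fun j _ => ?_
      split
      · simp [AdMap]
      · simp

theorem Phi_homLieD (mul : A →ₗ[K] A →ₗ[K] A) (α : A ≃ₗ[K] A)
    (hmul : ∀ x y : A, α.symm (mul x y) = mul (α.symm x) (α.symm y))
    (β : V →ₗ[K] V) (ρ μ : A →ₗ[K] Module.End K V)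
    (m : ℕ) (w : (Fin m → A) → (A →ₗ[K] V)) :
    (fun (xs : Fin (m + 1) → A) (z : A) =>
        homLieD (mul - mul.flip) α (hatRho mul α β ρ μ) (AdMap α β) m w xs z)
      = preLieD mul α ρ μ β m (fun v y => w v y) := by
  funext xs z
  simp only [homLieD, preLieD, LinearMap.add_apply, LinearMap.coe_sum,
    Finset.sum_apply, Phi_homLiePair, hatRho, LinearMap.coe_mk, AddHom.coe_mk,
    LinearMap.smul_apply, LinearMap.sub_apply, LinearMap.coe_comp,
    Function.comp_apply, LinearEquiv.coe_coe, LinearMap.flip_apply, hmul]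
  rw [← Finset.sum_add_distrib, ← Finset.sum_sub_distrib]
  congr 1
  refine Finset.sum_congr rfl fun i _ => ?_
  rw [smul_sub, smul_add]

theorem Phi_isPreLieCochain {m : ℕ} {w : (Fin m → A) → (A →ₗ[K] V)}
    (h : IsLieCochain m w) : IsPreLieCochain K m (fun v z => w v z) := by
  refine ⟨fun v z i a b => ?_, fun v z i c a => ?_, fun v a b => by simp,
    fun v c a => by simp, fun v z i j hij hv => ?_⟩
  · simpa using LinearMap.congr_fun (h.1 v i a b) z
  · simpa using LinearMap.congr_fun (h.2.1 v i c a) z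
  · simpa using LinearMap.congr_fun (h.2.2 v i j hij hv) z

theorem exists_lieCochain_lift {m : ℕ} {f : (Fin m → A) → A → V}
    (hf : IsPreLieCochain K m f) :
    ∃ w : (Fin m → A) → (A →ₗ[K] V), IsLieCochain m w ∧ (fun v z => w v z) = f := by
  refine ⟨fun v => ⟨⟨f v, hf.2.2.1 v⟩, hf.2.2.2.1 v⟩, ⟨?_, ?_, ?_⟩, rfl⟩
  · intro v i a b
    exact LinearMap.ext fun z => hf.1 v z i a b
  · intro v i c a
    exact LinearMap.ext fun z => hf.2.1 v z i c a
  · intro v i j hij hv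
    exact LinearMap.ext fun z => by simpa using hf.2.2.2.2 v z i j hij hv

theorem Phi_raw_injective {m : ℕ} {w w' : (Fin m → A) → (A →ₗ[K] V)}
    (h : (fun v z => w v z) = (fun v z => w' v z)) : w = w' :=
  funext fun v => LinearMap.ext fun z => congrFun (congrFun h v) z

end Main

/-- Let `(A,·,α)` be a Hom-pre-Lie algebra and `(V,β,ρ,μ)` a
representation with `α`, `β` invertible.  For every `n = m + 1`, the cohomology
group `H^m(A^C; Hom(A,V))` of the sub-adjacent Hom-Lie algebra `A^C` with
coefficients in `(Hom(A,V), Ad, ρ̂)` is isomorphic to the cohomology group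
`H^{m+1}(A; V)` of the Hom-pre-Lie algebra with coefficients in `(V,β,ρ,μ)`, the
isomorphism being induced by the canonical cochain isomorphism
`Φ(ω)(x₁,…,x_m,x) = ω(x₁,…,x_m)(x)`. -/
theorem homLie_cohomology_iso_preLie_cohomology
    {K A V : Type*} [Field K] [AddCommGroup A] [Module K A]
    [AddCommGroup V] [Module K V]
    (mul : A →ₗ[K] A →ₗ[K] A) (α : A ≃ₗ[K] A)
    (hA : IsHomPreLie mul (α : A →ₗ[K] A))
    (β : V ≃ₗ[K] V) (ρ μ : A →ₗ[K] Module.End K V)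
    (hrep : IsHomPreLieRep mul (α : A →ₗ[K] A) (β : V →ₗ[K] V) ρ μ)
    (m : ℕ) :
    ∃ e : (↥(lieZ (mul - mul.flip) α (hatRho mul α (β : V →ₗ[K] V) ρ μ)
              (AdMap α (β : V →ₗ[K] V)) m) ⧸
            ((lieB (mul - mul.flip) α (hatRho mul α (β : V →ₗ[K] V) ρ μ)
                (AdMap α (β : V →ₗ[K] V)) m).comap
              (lieZ (mul - mul.flip) α (hatRho mul α (β : V →ₗ[K] V) ρ μ)
                (AdMap α (β : V →ₗ[K] V)) m).subtype))
          ≃ₗ[K]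
          (↥(preZ mul α ρ μ (β : V →ₗ[K] V) m) ⧸
            ((preB mul α ρ μ (β : V →ₗ[K] V) m).comap
              (preZ mul α ρ μ (β : V →ₗ[K] V) m).subtype)),
      ∀ (w : lieZ (mul - mul.flip) α (hatRho mul α (β : V →ₗ[K] V) ρ μ)
              (AdMap α (β : V →ₗ[K] V)) m)
        (f : preZ mul α ρ μ (β : V →ₗ[K] V) m),
        (∀ (v : Fin m → A) (z : A), (f : (Fin m → A) → A → V) v z
            = ((w : (Fin m → A) → (A →ₗ[K] V)) v) z) →
        e (Submodule.Quotient.mk w) = Submodule.Quotient.mk f := by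
  have hmul : ∀ x y : A, α.symm (mul x y) = mul (α.symm x) (α.symm y) := by
    intro x y
    apply α.injective
    have := hA.1 (α.symm x) (α.symm y)
    simp only [LinearEquiv.coe_coe] at this
    rw [this]; simp
  set σ := hatRho mul α (β : V →ₗ[K] V) ρ μ with hσ
  set γ := AdMap α (β : V →ₗ[K] V) with hγ
  set Z1 := lieZ (mul - mul.flip) α σ γ m with hZ1
  set Z2 := preZ mul α ρ μ (β : V →ₗ[K] V) m with hZ2
  -- the cochain map on closed cochains
  have memZ2 : ∀ w : Z1, (fun v z => (w : (Fin m → A) → (A →ₗ[K] V)) v z) ∈ Z2 := by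
    intro w
    refine ⟨Phi_isPreLieCochain w.2.1, ?_⟩
    rw [← Phi_homLieD mul α hmul (β : V →ₗ[K] V) ρ μ m w.1, w.2.2]
    funext xs z; simp
  let F : Z1 →ₗ[K] Z2 :=
    { toFun := fun w => ⟨fun v z => (w : (Fin m → A) → (A →ₗ[K] V)) v z, memZ2 w⟩
      map_add' := fun w w' => Subtype.ext (by funext v z; rfl)
      map_smul' := fun c w => Subtype.ext (by funext v z; rfl) }
  have Finj : Function.Injective F := by
    intro w w' h
    exact Subtype.ext (Phi_raw_injective (congrArg Subtype.val h))
  have Fsurj : Function.Surjective F := by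
    rintro ⟨f, hf, hd⟩
    obtain ⟨w0, hw0, hPhi⟩ := exists_lieCochain_lift hf
    have hD : homLieD (mul - mul.flip) α σ γ m w0 = 0 := by
      have h1 := Phi_homLieD mul α hmul (β : V →ₗ[K] V) ρ μ m w0
      rw [hPhi, hd] at h1
      exact funext fun xs => LinearMap.ext fun z => congrFun (congrFun h1 xs) z
    exact ⟨⟨w0, hw0, hD⟩, Subtype.ext hPhi⟩
  let eZ : Z1 ≃ₗ[K] Z2 := LinearEquiv.ofBijective F ⟨Finj, Fsurj⟩
  have hB : ((lieB (mul - mul.flip) α σ γ m).comap Z1.subtype).map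
      (eZ : Z1 →ₗ[K] Z2)
      = (preB mul α ρ μ (β : V →ₗ[K] V) m).comap Z2.subtype := by
    cases m with
    | zero =>
        show ((⊥ : Submodule K _).comap Z1.subtype).map _
          = (⊥ : Submodule K _).comap Z2.subtype
        rw [Submodule.comap_bot, Submodule.ker_subtype, Submodule.map_bot,
          Submodule.comap_bot, Submodule.ker_subtype]
    | succ k =>
        apply le_antisymm
        · rintro x ⟨w, hwB, rfl⟩
          obtain ⟨g, hg, hgd⟩ := hwB
          refine ⟨fun v z => g v z, Phi_isPreLieCochain hg, ?_⟩
          rw [← Phi_homLieD mul α hmul (β : V →ₗ[K] V) ρ μ k g, hgd]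
          rfl
        · rintro ⟨f, hfZ⟩ ⟨g', hg', hgd'⟩
          obtain ⟨w, hFw⟩ := Fsurj ⟨f, hfZ⟩
          refine ⟨w, ?_, hFw⟩
          obtain ⟨w0, hw0, hPhi⟩ := exists_lieCochain_lift hg'
          refine ⟨w0, hw0, ?_⟩
          apply Phi_raw_injective
          rw [Phi_homLieD mul α hmul (β : V →ₗ[K] V) ρ μ k w0, hPhi, hgd']
          exact (congrArg Subtype.val hFw).symm
  refine ⟨Submodule.Quotient.equiv _ _ eZ hB, ?_⟩
  intro w f hwf
  have hF : eZ w = f := by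
    apply Subtype.ext
    funext v z
    exact (hwf v z).symm
  simp only [Submodule.Quotient.equiv_apply, Submodule.mapQ_apply, LinearEquiv.coe_coe]
  rw [hF]
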